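/- Let k be an even positive integer and let g : ℍ → ℂ be a function satisfying g∣[k]γ = g for all γ ∈ Γ₀(2) and g∣[k]W₄ = -g. Then g∣[k]T_{1/2} = g. Consequently, if in addition g∣[k]T_{1/2} = -g, then g = 0. -/

import Mathlib

open UpperHalfPlane Matrix MatrixGroups CongruenceSubgroup

noncomputable section

/-- An element of `GL(2,ℝ)⁺` built from a 2×2 real matrix of positive determinant. -/
def mkGLPos (M : Matrix (Fin 2) (Fin 2) ℝ) (h : 0 < M.det) : GL(2, ℝ)⁺ :=
  ⟨Matrix.GeneralLinearGroup.mkOfDetNeZero M h.ne', by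
    simpa [Matrix.mem_glpos, Matrix.GeneralLinearGroup.val_det_apply,
      Matrix.GeneralLinearGroup.mkOfDetNeZero] using h⟩

set_option synthInstance.maxHeartbeats 400000 in
/-- The weight-`k` slash operator with the classical normalization
`(f ∣[k] A)(τ) = det(A)^(k/2) · (cτ+d)^(-k) · f(Aτ)`. -/
def wtSlash (k : ℤ) (A : GL(2, ℝ)⁺) (f : ℍ → ℂ) : ℍ → ℂ := fun τ =>
  ((((A : GL (Fin 2) ℝ) : Matrix (Fin 2) (Fin 2) ℝ).det ^ ((k : ℝ) / 2) : ℝ) : ℂ) *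
    (UpperHalfPlane.denom A τ) ^ (-k) * f (A • τ)

/-- The image of an integral special linear matrix in `GL(2,ℝ)⁺`. -/
def toGL (γ : SL(2, ℤ)) : GL(2, ℝ)⁺ :=
  Matrix.SpecialLinearGroup.toGLPos (γ.map (Int.castRingHom ℝ))

/-- `W₄ = [[0,-1],[4,0]]` as an element of `GL(2,ℝ)⁺`. -/
def W4 : GL(2, ℝ)⁺ := mkGLPos !![0, -1; 4, 0] (by norm_num [Matrix.det_fin_two_of])

/-- `T_{1/2} = [[1,1/2],[0,1]]` as an element of `GL(2,ℝ)⁺`. -/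
def Thalf : GL(2, ℝ)⁺ := mkGLPos !![1, 1/2; 0, 1] (by norm_num [Matrix.det_fin_two_of])

/-!
Conjugating `T_{1/2}` by `W₄` gives `[[1,0],[-2,1]] ∈ Γ₀(2)`. Since `g` is an eigenfunction of
`W₄` and is fixed by `Γ₀(2)`, the slash action of `W₄ T_{1/2} = [[1,0],[-2,1]] W₄` gives
`-(g∣T_{1/2}) = -g`. If also `g∣T_{1/2} = -g`, then `g = -g`, so `g = 0`.
-/

lemma det_pos_of_mem_glpos (A : GL(2, ℝ)⁺) :
    0 < ((A : GL (Fin 2) ℝ) : Matrix (Fin 2) (Fin 2) ℝ).det := by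
  simpa [Matrix.GeneralLinearGroup.val_det_apply] using (Matrix.mem_glpos _).1 A.prop

set_option synthInstance.maxHeartbeats 800000 in
lemma wtSlash_mul (k : ℤ) (A B : GL(2, ℝ)⁺) (f : ℍ → ℂ) :
    wtSlash k (A * B) f = wtSlash k B (wtSlash k A f) := by
  funext τ
  have hdet : (((A * B : GL(2, ℝ)⁺) : GL (Fin 2) ℝ) : Matrix (Fin 2) (Fin 2) ℝ).det
      = ((A : GL (Fin 2) ℝ) : Matrix (Fin 2) (Fin 2) ℝ).det *
        ((B : GL (Fin 2) ℝ) : Matrix (Fin 2) (Fin 2) ℝ).det := by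
    simp [Matrix.det_mul]
  have hσ : ∀ x, σ (B : GL (Fin 2) ℝ) x = x := fun x => by
    simp [σ, Matrix.GeneralLinearGroup.val_det_apply, det_pos_of_mem_glpos B]
  simp only [wtSlash, hdet,
    Real.mul_rpow (det_pos_of_mem_glpos A).le (det_pos_of_mem_glpos B).le]
  rw [Subgroup.coe_mul, UpperHalfPlane.denom_cocycle_σ, hσ, mul_smul, mul_zpow,
    show ((B : GL (Fin 2) ℝ) • τ) = B • τ from rfl]
  push_cast
  ring

lemma wtSlash_neg (k : ℤ) (A : GL(2, ℝ)⁺) (f : ℍ → ℂ) :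
    wtSlash k A (-f) = -wtSlash k A f := by
  funext τ
  simp only [wtSlash, Pi.neg_apply, mul_neg]

lemma wtSlash_eq_self_of_mul_eq_mul {k : ℤ} {A B C : GL(2, ℝ)⁺} {f : ℍ → ℂ}
    (hABC : A * B = C * A) (hC : wtSlash k C f = f) (hA : wtSlash k A f = -f) :
    wtSlash k B f = f := by
  have h : -wtSlash k B f = -f := by
    rw [← wtSlash_neg, ← hA, ← wtSlash_mul, hABC, wtSlash_mul, hC]
  exact neg_inj.mp h

def lowerUnipotent (n : ℤ) : SL(2, ℤ) := ⟨!![1, 0; n, 1], by simp [Matrix.det_fin_two_of]⟩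

lemma lowerUnipotent_mem_Gamma0 {N : ℕ} {n : ℤ} (hn : (N : ℤ) ∣ n) :
    lowerUnipotent n ∈ Gamma0 N := by
  rw [Gamma0_mem]
  simpa [lowerUnipotent, ZMod.intCast_zmod_eq_zero_iff_dvd] using hn

lemma W4_mul_Thalf : W4 * Thalf = toGL (lowerUnipotent (-2)) * W4 := by
  apply Subtype.ext
  apply Units.ext
  show !![(0 : ℝ), -1; 4, 0] * !![1, 1/2; 0, 1] =
    (lowerUnipotent (-2)).1.map (Int.castRingHom ℝ) * !![0, -1; 4, 0]
  ext i j
  fin_cases i <;> fin_cases j <;> norm_num [lowerUnipotent, Matrix.mul_apply, Fin.sum_univ_succ]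

theorem level_two_form_Thalf_invariant_general (k : ℤ) (g : ℍ → ℂ)
    (hΓ : ∀ γ : SL(2, ℤ), γ ∈ Gamma0 2 → wtSlash k (toGL γ) g = g)
    (hW : wtSlash k W4 g = -g) :
    wtSlash k Thalf g = g ∧ (wtSlash k Thalf g = -g → g = 0) := by
  have hT : wtSlash k Thalf g = g :=
    wtSlash_eq_self_of_mul_eq_mul W4_mul_Thalf
      (hΓ _ (lowerUnipotent_mem_Gamma0 (by norm_num))) hW
  refine ⟨hT, fun hT' => funext fun τ => ?_⟩
  exact CharZero.eq_neg_self_iff.mp (congrFun (hT.symm.trans hT') τ)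

/-- if `g : ℍ → ℂ` is slash-invariant of even positive weight `k` under `Γ₀(2)`
and `g∣[k]W₄ = -g`, then `g∣[k]T_{1/2} = g`; consequently if also `g∣[k]T_{1/2} = -g`
then `g = 0`. -/
theorem level_two_form_Thalf_invariant (k : ℤ) (hk : 0 < k) (hke : Even k) (g : ℍ → ℂ)
    (hΓ : ∀ γ : SL(2, ℤ), γ ∈ Gamma0 2 → wtSlash k (toGL γ) g = g)
    (hW : wtSlash k W4 g = -g) :
    wtSlash k Thalf g = g ∧ (wtSlash k Thalf g = -g → g = 0) :=
  level_two_form_Thalf_invariant_general k g hΓ hW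

end
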